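/- arXiv:1010.1294 — 4 statements merged into one kernel-verified Lean document; each statement's English description precedes it below -/
import Mathlib

section
/- Let M be a positive-definite Hermitian n×n matrix and let ω ⊆ {1,…,n}. Let M_ω be the principal submatrix of M with rows and columns indexed by ω, and M_{ω̄} the principal submatrix indexed by the complement of ω. Then det(M) ≤ det(M_ω) · det(M_{ω̄}). -/
open Matrix
open scoped ComplexOrder MatrixOrder

/-!
Permuting the indices puts `M` in block form `[[A, B], [Bᴴ, D]]` with `A = M_ω`, `D = M_ω̄`.
By the Schur complement formula `det M = det A * det (D - Bᴴ A⁻¹ B)`, and `D` is the sum of the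
positive semidefinite Schur complement and the positive semidefinite matrix `Bᴴ A⁻¹ B`.
The determinant is monotone under adding a positive semidefinite `T` to a positive semidefinite
`S`: when `S` is invertible with square root `Q`, `S + T = Q (1 + Q⁻¹ T Q⁻¹) Q`, and
`det (1 + C) = ∏ (1 + λᵢ) ≥ 1` for `C ≥ 0`.
-/

namespace Matrix

variable {m n 𝕜 : Type*} [Fintype m] [Fintype n] [DecidableEq m] [DecidableEq n] [RCLike 𝕜]

lemma IsHermitian.det_cfc {A : Matrix n n 𝕜} (hA : A.IsHermitian) (f : ℝ → ℝ) :
    (cfc f A).det = ∏ i, (f (hA.eigenvalues i) : 𝕜) := by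
  rw [hA.cfc_eq]
  simp [IsHermitian.cfc, -Unitary.conjStarAlgAut_apply]

lemma PosSemidef.one_le_det_one_add {C : Matrix n n 𝕜} (hC : C.PosSemidef) :
    1 ≤ (1 + C).det := by
  have h : 1 + C = cfc (fun x : ℝ => 1 + x) C := by
    rw [cfc_const_add 1 (fun x => x) C (ha := hC.1.isSelfAdjoint), cfc_id' ℝ C, map_one]
  rw [h, hC.1.det_cfc, ← RCLike.ofReal_prod, ← RCLike.ofReal_one, RCLike.ofReal_le_ofReal]
  exact Finset.one_le_prod fun i _ => le_add_of_nonneg_right (hC.eigenvalues_nonneg i)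

lemma PosSemidef.det_le_det_add {A B : Matrix n n 𝕜} (hA : A.PosSemidef) (hB : B.PosSemidef) :
    A.det ≤ (A + B).det := by
  obtain hdet | hdet := eq_or_ne A.det 0
  · exact hdet ▸ (hA.add hB).det_nonneg
  set Q := CFC.sqrt A
  have hQQ : Q * Q = A := CFC.sqrt_mul_sqrt_self A hA.nonneg
  have hQ : IsUnit Q.det := by
    refine isUnit_iff_ne_zero.2 fun h => hdet ?_
    rw [← hQQ, det_mul, h, zero_mul]
  set C := Q⁻¹ * B * Q⁻¹
  have hC : C.PosSemidef := by
    have hQh : Qᴴ = Q := (CFC.sqrt_nonneg A).posSemidef.1.eq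
    simpa [C, conjTranspose_nonsing_inv, hQh] using
      hB.mul_mul_conjTranspose_same Q⁻¹
  have hAB : A + B = Q * (1 + C) * Q := by
    simp only [C, mul_add, add_mul, mul_one, hQQ, ← Matrix.mul_assoc, mul_nonsing_inv _ hQ, one_mul]
    simp only [Matrix.mul_assoc, nonsing_inv_mul _ hQ, mul_one]
  calc A.det = A.det * 1 := (mul_one _).symm
    _ ≤ A.det * (1 + C).det := mul_le_mul_of_nonneg_left hC.one_le_det_one_add hA.det_nonneg
    _ = (A + B).det := by rw [hAB, ← hQQ, det_mul, det_mul, det_mul]; ring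

lemma PosDef.det_fromBlocks_le {A : Matrix m m 𝕜} {B : Matrix m n 𝕜} {D : Matrix n n 𝕜}
    (h : (fromBlocks A B Bᴴ D).PosDef) : (fromBlocks A B Bᴴ D).det ≤ A.det * D.det := by
  have hA : A.PosDef := h.submatrix Sum.inl_injective
  have := hA.isUnit.invertible
  have hS : (D - Bᴴ * A⁻¹ * B).PosSemidef := (PosDef.fromBlocks₁₁ B D hA).1 h.posSemidef
  have hT : (Bᴴ * A⁻¹ * B).PosSemidef := hA.inv.posSemidef.conjTranspose_mul_mul_same B
  rw [det_fromBlocks₁₁, invOf_eq_nonsing_inv]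
  calc A.det * (D - Bᴴ * A⁻¹ * B).det ≤ A.det * (D - Bᴴ * A⁻¹ * B + Bᴴ * A⁻¹ * B).det :=
        mul_le_mul_of_nonneg_left (hS.det_le_det_add hT) hA.det_pos.le
    _ = A.det * D.det := by rw [sub_add_cancel]

theorem PosDef.det_le_det_submatrix_mul_det_submatrix_compl {M : Matrix n n 𝕜} (hM : M.PosDef)
    (p : n → Prop) [DecidablePred p] :
    M.det ≤ (M.submatrix ((↑) : {i // p i} → n) (↑)).det *
      (M.submatrix ((↑) : {i // ¬ p i} → n) (↑)).det := by
  set e := Equiv.sumCompl p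
  have hblocks : M.submatrix e e = fromBlocks (M.submatrix (↑) (↑)) (M.submatrix (↑) (↑))
      (M.submatrix (↑) (↑))ᴴ (M.submatrix (↑) (↑)) := by
    ext (i | i) (j | j)
    · rfl
    · rfl
    · exact (hM.1.apply _ _).symm
    · rfl
  rw [← det_submatrix_equiv_self e M, hblocks]
  exact PosDef.det_fromBlocks_le (hblocks ▸ hM.submatrix e.injective)

end Matrix

theorem hadamard_fischer {n : ℕ} (M : Matrix (Fin n) (Fin n) ℂ)
    (hM : M.PosDef) (ω : Finset (Fin n)) :
    M.det.re ≤
      (Matrix.det (M.submatrix (fun i : {i : Fin n // i ∈ ω} => (i : Fin n))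
          (fun i : {i : Fin n // i ∈ ω} => (i : Fin n)))).re *
      (Matrix.det (M.submatrix (fun i : {i : Fin n // i ∉ ω} => (i : Fin n))
          (fun i : {i : Fin n // i ∉ ω} => (i : Fin n)))).re := by
  have h := (Complex.le_def.1 (hM.det_le_det_submatrix_mul_det_submatrix_compl (· ∈ ω))).1
  have hD_im := (Complex.lt_def.1 (hM.submatrix (Subtype.val_injective (p := (· ∉ ω)))).det_pos).2
  rw [Complex.mul_re, ← hD_im, Complex.zero_im, mul_zero, sub_zero] at h
  -- only the `Fintype` instances on the subtypes and the `CommRing ℂ` instance differ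
  convert h
  rfl
end

section
/- Let A and B be Hilbert–Schmidt operators on a Hilbert space. Then |det₂(Id + A) − det₂(Id + B)| ≤ ‖A − B‖₂ · exp(½(‖A‖₂ + ‖B‖₂ + 1)²), where det₂ denotes the Carleman–Fredholm regularized determinant and ‖·‖₂ the Hilbert–Schmidt norm. -/
/-!
Hadamard's inequality applied to the columns `eⱼ + aⱼ` of `1 + A`, together with
`1 + 2 Re aⱼⱼ + ‖aⱼ‖² ≤ exp (2 Re aⱼⱼ + ‖aⱼ‖²)`, gives `|det₂(1 + A)| ≤ exp (‖A‖₂² / 2)`: the factor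
`e^{-Tr A}` cancels the diagonal terms exactly.

The function `z ↦ det₂(1 + A + z (B - A))` is entire, and on every circle of radius `1 / ‖A - B‖₂`
centred on `[0, 1]` its argument has Hilbert–Schmidt norm at most `‖A‖₂ + ‖B‖₂ + 1`. Cauchy's
estimate then bounds its derivative along `[0, 1]` by `‖A - B‖₂ exp ((‖A‖₂ + ‖B‖₂ + 1)² / 2)`, and
the mean value inequality concludes.
-/

open Matrix

/-- The Hilbert–Schmidt (Frobenius) norm of a matrix. -/
noncomputable def hsNorm {n : ℕ} (A : Matrix (Fin n) (Fin n) ℂ) : ℝ :=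
  Real.sqrt (∑ i, ∑ j, ‖A i j‖ ^ 2)

/-- The Carleman–Fredholm regularized determinant `det₂(Id + A) = det(Id + A) e^{-Tr A}`. -/
noncomputable def det2 {n : ℕ} (A : Matrix (Fin n) (Fin n) ℂ) : ℂ :=
  Matrix.det (1 + A) * Complex.exp (-Matrix.trace A)

open Metric

/-- Hadamard's inequality. -/
theorem Matrix.norm_det_le_prod_sqrt_sum_norm_sq {𝕜 ι : Type*} [RCLike 𝕜] [Fintype ι]
    [LinearOrder ι] [LocallyFiniteOrderBot ι] (M : Matrix ι ι 𝕜) :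
    ‖M.det‖ ≤ ∏ j, Real.sqrt (∑ i, ‖M i j‖ ^ 2) := by
  classical
  have hcard : Module.finrank 𝕜 (EuclideanSpace 𝕜 ι) = Fintype.card ι := by simp
  let col : ι → EuclideanSpace 𝕜 ι := fun j => WithLp.toLp 2 fun i => M i j
  let e := InnerProductSpace.gramSchmidtOrthonormalBasis hcard col
  let b := EuclideanSpace.basisFun ι 𝕜
  have hM : b.toBasis.toMatrix col = M := by
    ext i j
    simp [col, b, Module.Basis.toMatrix_apply]
  -- `M = P R` with `P` unitary and `R` upper triangular with diagonal entries `⟪e j, col j⟫`.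
  have hdet : ‖M.det‖ = ∏ j, ‖(inner 𝕜 (e j) (col j) : 𝕜)‖ := by
    rw [← hM, ← Module.Basis.toMatrix_mul_toMatrix b.toBasis e.toBasis col,
      Matrix.det_mul, norm_mul, ← Module.Basis.det_apply, ← Module.Basis.det_apply,
      OrthonormalBasis.coe_toBasis, b.det_to_matrix_orthonormalBasis e, one_mul,
      InnerProductSpace.gramSchmidtOrthonormalBasis_det, norm_prod]
  rw [hdet]
  gcongr with j
  calc ‖(inner 𝕜 (e j) (col j) : 𝕜)‖ ≤ ‖e j‖ * ‖col j‖ := norm_inner_le_norm _ _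
    _ = Real.sqrt (∑ i, ‖M i j‖ ^ 2) := by simp [e.orthonormal.1 j, col, EuclideanSpace.norm_eq]

theorem Real.sqrt_le_exp_sub_one_div_two (x : ℝ) : Real.sqrt x ≤ Real.exp ((x - 1) / 2) := by
  refine Real.sqrt_le_iff.2 ⟨(Real.exp_pos _).le, ?_⟩
  rw [← Real.exp_nat_mul, Nat.cast_ofNat, mul_div_cancel₀ _ two_ne_zero]
  linarith [Real.add_one_le_exp (x - 1)]

theorem Matrix.sum_norm_sq_one_add_apply {ι : Type*} [Fintype ι] [DecidableEq ι]
    (A : Matrix ι ι ℂ) (j : ι) :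
    ∑ i, ‖(1 + A) i j‖ ^ 2 = 1 + 2 * (A j j).re + ∑ i, ‖A i j‖ ^ 2 := by
  have hoff : ∀ i ∈ Finset.univ.erase j, ‖(1 + A) i j‖ ^ 2 = ‖A i j‖ ^ 2 := fun i hi => by
    simp [one_apply_ne (Finset.ne_of_mem_erase hi)]
  have hdiag : ‖1 + A j j‖ ^ 2 = 1 + 2 * (A j j).re + ‖A j j‖ ^ 2 := by
    simp only [Complex.sq_norm, Complex.normSq_apply, Complex.add_re, Complex.add_im,
      Complex.one_re, Complex.one_im]
    ring
  rw [← Finset.add_sum_erase _ _ (Finset.mem_univ j),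
    ← Finset.add_sum_erase _ _ (Finset.mem_univ j), Finset.sum_congr rfl hoff, add_apply, one_apply_eq, hdiag, add_assoc]

theorem Differentiable.matrix_det {𝕜 E ι : Type*} [NontriviallyNormedField 𝕜] [NormedAddCommGroup E]
    [NormedSpace 𝕜 E] [Fintype ι] [DecidableEq ι] {f : E → Matrix ι ι 𝕜}
    (hf : ∀ i j, Differentiable 𝕜 fun x => f x i j) : Differentiable 𝕜 fun x => (f x).det := by
  simp_rw [det_apply, Units.smul_def, zsmul_eq_mul]
  fun_prop

theorem norm_sub_le_of_forall_mem_sphere_norm_le {E : Type*} [NormedAddCommGroup E]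
    [NormedSpace ℂ E] {f : ℂ → E} (hf : Differentiable ℂ f) {x y : ℂ} {r M : ℝ} (hr : 0 < r)
    (hM : ∀ c ∈ segment ℝ x y, ∀ z ∈ sphere c r, ‖f z‖ ≤ M) :
    ‖f y - f x‖ ≤ M / r * ‖y - x‖ :=
  (convex_segment x y).norm_image_sub_le_of_norm_deriv_le (fun c _ => hf c)
    (fun c hc => Complex.norm_deriv_le_of_forall_mem_sphere_norm_le hr hf.diffContOnCl (hM c hc))
    (left_mem_segment ℝ x y) (right_mem_segment ℝ x y)

theorem norm_add_smul_sub_le {E : Type*} [SeminormedAddCommGroup E] [NormedSpace ℂ E] (x y : E)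
    {c : ℂ} (hc : c ∈ segment ℝ 0 1) (z : ℂ) :
    ‖x + z • (y - x)‖ ≤ ‖x‖ + ‖y‖ + ‖z - c‖ * ‖y - x‖ := by
  have hc0 : ‖c‖ ≤ 1 := by
    simpa using (convex_closedBall (0 : ℂ) 1).segment_subset (by simp) (by simp) hc
  have hc1 : ‖1 - c‖ ≤ 1 := by
    simpa [dist_eq_norm, norm_sub_rev] using
      (convex_closedBall (1 : ℂ) 1).segment_subset (by simp) (by simp) hc
  have hsplit : x + z • (y - x) = (1 - c) • x + c • y + (z - c) • (y - x) := by
    simp only [sub_smul, smul_sub, one_smul]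
    abel
  calc ‖x + z • (y - x)‖ ≤ ‖1 - c‖ * ‖x‖ + ‖c‖ * ‖y‖ + ‖z - c‖ * ‖y - x‖ := by
        rw [hsplit, ← norm_smul, ← norm_smul, ← norm_smul]
        exact norm_add₃_le
    _ ≤ ‖x‖ + ‖y‖ + ‖z - c‖ * ‖y - x‖ := by
        gcongr
        · exact mul_le_of_le_one_left (norm_nonneg _) hc1
        · exact mul_le_of_le_one_left (norm_nonneg _) hc0

section Frobenius

attribute [local instance] frobeniusSeminormedAddCommGroup frobeniusNormedAddCommGroup
  frobeniusNormedSpace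

theorem hsNorm_eq_norm {n : ℕ} (A : Matrix (Fin n) (Fin n) ℂ) : hsNorm A = ‖A‖ := by
  rw [frobenius_norm_def, hsNorm, Real.sqrt_eq_rpow]
  norm_num

theorem hsNorm_sq {n : ℕ} (A : Matrix (Fin n) (Fin n) ℂ) :
    hsNorm A ^ 2 = ∑ i, ∑ j, ‖A i j‖ ^ 2 :=
  Real.sq_sqrt (by positivity)

theorem hsNorm_nonneg {n : ℕ} (A : Matrix (Fin n) (Fin n) ℂ) : 0 ≤ hsNorm A :=
  Real.sqrt_nonneg _

theorem hsNorm_pos {n : ℕ} {A : Matrix (Fin n) (Fin n) ℂ} (hA : A ≠ 0) : 0 < hsNorm A := by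
  rwa [hsNorm_eq_norm, norm_pos_iff]

theorem hsNorm_add_smul_sub_le {n : ℕ} (A B : Matrix (Fin n) (Fin n) ℂ) {c : ℂ}
    (hc : c ∈ segment ℝ 0 1) (z : ℂ) :
    hsNorm (A + z • (B - A)) ≤ hsNorm A + hsNorm B + ‖z - c‖ * hsNorm (A - B) := by
  simpa only [hsNorm_eq_norm, norm_sub_rev B A] using norm_add_smul_sub_le A B hc z

end Frobenius

theorem norm_det2_le {n : ℕ} (A : Matrix (Fin n) (Fin n) ℂ) :
    ‖det2 A‖ ≤ Real.exp (hsNorm A ^ 2 / 2) := by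
  have hcol : ∀ j, Real.sqrt (∑ i, ‖(1 + A) i j‖ ^ 2) ≤
      Real.exp ((A j j).re + (∑ i, ‖A i j‖ ^ 2) / 2) := fun j => by
    convert Real.sqrt_le_exp_sub_one_div_two _ using 2
    rw [sum_norm_sq_one_add_apply]
    ring
  calc ‖det2 A‖ = ‖(1 + A).det‖ * Real.exp (-∑ j, (A j j).re) := by
        simp [det2, Complex.norm_exp, trace, Complex.re_sum]
    _ ≤ (∏ j, Real.exp ((A j j).re + (∑ i, ‖A i j‖ ^ 2) / 2)) * Real.exp (-∑ j, (A j j).re) := by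
        gcongr
        exact (norm_det_le_prod_sqrt_sum_norm_sq _).trans
          (Finset.prod_le_prod (fun _ _ => Real.sqrt_nonneg _) fun j _ => hcol j)
    _ = Real.exp (hsNorm A ^ 2 / 2) := by
        rw [← Real.exp_sum, ← Real.exp_add, hsNorm_sq, Finset.sum_comm, Finset.sum_add_distrib,
          Finset.sum_div]
        ring_nf

theorem differentiable_det2_add_smul {n : ℕ} (A C : Matrix (Fin n) (Fin n) ℂ) :
    Differentiable ℂ fun z : ℂ => det2 (A + z • C) := by
  refine (Differentiable.matrix_det fun i j => ?_).mul ?_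
  · simp only [Matrix.add_apply, Matrix.smul_apply, smul_eq_mul]
    fun_prop
  · simp only [trace, diag, Matrix.add_apply, Matrix.smul_apply, smul_eq_mul]
    fun_prop

theorem carleman_fredholm_det_lipschitz {n : ℕ} (A B : Matrix (Fin n) (Fin n) ℂ) :
    ‖det2 A - det2 B‖ ≤
      hsNorm (A - B) * Real.exp ((1 / 2) * (hsNorm A + hsNorm B + 1) ^ 2) := by
  rcases eq_or_ne A B with rfl | hAB
  · simpa using mul_nonneg (hsNorm_nonneg 0) (Real.exp_pos _).le
  have hd : 0 < hsNorm (A - B) := hsNorm_pos (sub_ne_zero.2 hAB)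
  have hbound : ∀ c ∈ segment ℝ (0 : ℂ) 1, ∀ z ∈ sphere c (hsNorm (A - B))⁻¹,
      ‖det2 (A + z • (B - A))‖ ≤ Real.exp ((1 / 2) * (hsNorm A + hsNorm B + 1) ^ 2) := by
    intro c hc z hz
    have hradius : ‖z - c‖ * hsNorm (A - B) = 1 := by
      rw [← dist_eq_norm, mem_sphere.1 hz, inv_mul_cancel₀ hd.ne']
    calc ‖det2 (A + z • (B - A))‖ ≤ Real.exp (hsNorm (A + z • (B - A)) ^ 2 / 2) := norm_det2_le _
      _ ≤ _ := by
        rw [div_eq_inv_mul, one_div]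
        gcongr
        · exact hsNorm_nonneg _
        · linarith [hsNorm_add_smul_sub_le A B hc z]
  have hlip := norm_sub_le_of_forall_mem_sphere_norm_le (differentiable_det2_add_smul A (B - A))
    (inv_pos.2 hd) hbound
  rw [norm_sub_rev]
  simpa [mul_comm] using hlip
end

section
/- Let K: ℝ → ℝ be a C¹ function with ‖K‖_∞ ≤ Cn and ‖K′‖_∞ ≤ Cn², and let ρ_t(x₁,…,x_t) = det(K(x_i − x_j))_{1≤i,j≤t}. If all points x₁,…,x_t lie in an interval of length c_n, then |ρ_t(x₁,…,x_t)| ≤ C' n^{2t−1} c_n^{t−1} for a constant C' depending only on C and t. -/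
/-!
Subtracting the first row from the others does not change the determinant. The first row then
has entries `K (x₀ - xⱼ)` of size `≤ C n`, and by the mean value theorem every other row has
entries `K (xᵢ - xⱼ) - K (x₀ - xⱼ)` of size `≤ C n² |xᵢ - x₀| ≤ C n² c`. Expanding the
determinant over permutations, each of the `t!` terms is bounded by the product of the row
bounds, `C n · (C n² c)^(t-1)`.
-/

open Matrix

namespace Matrix

open Equiv
open scoped Nat

variable {n : Type*} [Fintype n] [DecidableEq n]

theorem abv_det_le_factorial_mul_prod {R S : Type*} [CommRing R] [Nontrivial R] [CommRing S]
    [LinearOrder S] [IsStrictOrderedRing S] {A : Matrix n n R} {abv : AbsoluteValue R S}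
    {x : n → S} (hx : ∀ i j, abv (A i j) ≤ x i) :
    abv A.det ≤ (Fintype.card n)! • ∏ i, x i :=
  calc
    abv A.det = abv (∑ σ : Perm n, Perm.sign σ • ∏ i, A (σ i) i) := congr_arg abv (det_apply _)
    _ ≤ ∑ σ : Perm n, abv (Perm.sign σ • ∏ i, A (σ i) i) := abv.sum_le _ _
    _ = ∑ σ : Perm n, ∏ i, abv (A (σ i) i) :=
      Finset.sum_congr rfl fun σ _ => by rw [abv.map_units_int_smul, abv.map_prod]
    _ ≤ ∑ σ : Perm n, ∏ i, x (σ i) :=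
      Finset.sum_le_sum fun σ _ =>
        Finset.prod_le_prod (fun i _ => abv.nonneg _) fun i _ => hx (σ i) i
    _ = (Fintype.card n)! • ∏ i, x i := by
      simp only [Equiv.prod_comp, Finset.sum_const, Finset.card_univ, Fintype.card_perm]

theorem det_eq_det_sub_row {R : Type*} [CommRing R] (A : Matrix n n R) (k : n) :
    A.det = (of fun i j => if i = k then A k j else A i j - A k j).det := by
  refine det_eq_of_forall_row_eq_smul_add_const (fun i => if i = k then 0 else 1) k
    (if_pos rfl) fun i j => ?_
  by_cases hi : i = k <;> simp [hi]

theorem abs_det_le_of_abs_sub_row_le {R : Type*} [CommRing R] [LinearOrder R]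
    [IsStrictOrderedRing R] (A : Matrix n n R) (k : n) {a b : R} (ha : ∀ j, |A k j| ≤ a)
    (hb : ∀ i, i ≠ k → ∀ j, |A i j - A k j| ≤ b) :
    |A.det| ≤ (Fintype.card n)! * (a * b ^ (Fintype.card n - 1)) := by
  have hrow : ∀ i j, |(of fun i j => if i = k then A k j else A i j - A k j) i j| ≤
      if i = k then a else b := by
    intro i j
    by_cases hi : i = k
    · simpa [hi] using ha j
    · simpa [hi] using hb i hi j
  rw [det_eq_det_sub_row A k]
  refine (abv_det_le_factorial_mul_prod (abv := AbsoluteValue.abs) hrow).trans_eq ?_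
  rw [nsmul_eq_mul, Fintype.prod_eq_mul_prod_compl k]
  simp [Finset.prod_ite_of_false, Finset.card_compl]

end Matrix

theorem clustered_correlation_determinant_bound (C : ℝ) (hC : 0 < C) (t : ℕ) (ht : 1 ≤ t) :
    ∃ C' : ℝ, 0 < C' ∧
      ∀ (n : ℕ), 1 ≤ n → ∀ (c : ℝ), 0 < c → ∀ (K : ℝ → ℝ),
        ContDiff ℝ 1 K →
        (∀ x : ℝ, |K x| ≤ C * n) →
        (∀ x : ℝ, |deriv K x| ≤ C * n ^ 2) →
        ∀ (x : Fin t → ℝ), (∃ a : ℝ, ∀ i, x i ∈ Set.Icc a (a + c)) →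
          |Matrix.det (Matrix.of fun i j : Fin t => K (x i - x j))| ≤
            C' * (n : ℝ) ^ (2 * t - 1) * c ^ (t - 1) := by
  obtain ⟨s, rfl⟩ : ∃ s, t = s + 1 := ⟨t - 1, (Nat.sub_add_cancel ht).symm⟩
  refine ⟨(s + 1).factorial * C ^ (s + 1), by positivity, ?_⟩
  intro n _ c _ K hK hK_le hK'_le x ⟨a, hx⟩
  have hK_lip : ∀ u v, |K u - K v| ≤ C * n ^ 2 * |u - v| := fun u v => by
    simpa only [Real.norm_eq_abs] using convex_univ.norm_image_sub_le_of_norm_deriv_le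
      (fun y _ => (hK.differentiable one_ne_zero) y) (fun y _ => hK'_le y)
      (Set.mem_univ v) (Set.mem_univ u)
  have hrow : ∀ i, i ≠ 0 → ∀ j, |K (x i - x j) - K (x 0 - x j)| ≤ C * n ^ 2 * c := by
    intro i _ j
    refine (hK_lip _ _).trans (mul_le_mul_of_nonneg_left ?_ (by positivity))
    simpa [← Real.dist_eq] using Real.dist_le_of_mem_Icc (hx i) (hx 0)
  refine (abs_det_le_of_abs_sub_row_le _ 0 (fun j => hK_le _) hrow).trans_eq ?_
  rw [Fintype.card_fin, show 2 * (s + 1) - 1 = 2 * s + 1 by omega, Nat.add_sub_cancel]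
  ring
end

section
/- For a 3×3 determinant with columns bounded in Euclidean norm by Cn, Cn²c, Cn²c respectively (where c > 0), the determinant is bounded in absolute value by C³ n⁵ c². Consequently, if K: ℝ → ℝ satisfies ‖K‖_∞ ≤ Cn and ‖K′‖_∞ ≤ Cn², then for 0 ≤ x₁, x₂ ≤ c, the determinant det₃ₓ₃ of the matrix with rows (K(0), K(x₁)−K(0), K(x₂)−K(0)), (K(x₁), K(0)−K(x₁), K(x₁−x₂)−K(x₁)), (K(x₂), K(x₁−x₂)−K(x₂), K(0)−K(x₂)) is O(n⁵c²). -/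
/-!
For a `3 × 3` real matrix, `det M = c₀ ⬝ᵥ (c₁ ⨯₃ c₂)` in terms of its columns, so Cauchy–Schwarz
and Lagrange's identity `‖c₁ ⨯₃ c₂‖² = ‖c₁‖²‖c₂‖² - (c₁ ⬝ᵥ c₂)²` give Hadamard's bound
`|det M| ≤ ‖c₀‖ ‖c₁‖ ‖c₂‖`. For the kernel matrix, the first column has entries of size `Cn`; the
other two consist of differences `K u - K v` with `u, v ∈ [-c, c]`, which the mean value theorem
bounds by `2Cn²c`.
-/

open Matrix Set

theorem abs_dotProduct_le_sqrt_mul_sqrt {ι : Type*} [Fintype ι] (u v : ι → ℝ) :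
    |u ⬝ᵥ v| ≤ √(∑ i, u i ^ 2) * √(∑ i, v i ^ 2) := by
  refine abs_le.2 ⟨?_, Real.sum_mul_le_sqrt_mul_sqrt _ u v⟩
  have := Real.sum_mul_le_sqrt_mul_sqrt Finset.univ (-u) v
  simp only [Pi.neg_apply, neg_mul, Finset.sum_neg_distrib, neg_sq] at this
  rw [dotProduct]; linarith

theorem sum_sq_crossProduct_le (v w : Fin 3 → ℝ) :
    ∑ i, (v ⨯₃ w) i ^ 2 ≤ (∑ i, v i ^ 2) * ∑ i, w i ^ 2 := by
  have hsq (x : Fin 3 → ℝ) : ∑ i, x i ^ 2 = x ⬝ᵥ x := by simp only [dotProduct, sq]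
  rw [hsq, hsq, hsq, cross_dot_cross, dotProduct_comm w v]
  nlinarith [sq_nonneg (v ⬝ᵥ w)]

theorem abs_det_fin_three_le (M : Matrix (Fin 3) (Fin 3) ℝ) :
    |M.det| ≤ √(∑ i, M i 0 ^ 2) * √(∑ i, M i 1 ^ 2) * √(∑ i, M i 2 ^ 2) := by
  have hdet : M.det = (fun i ↦ M i 0) ⬝ᵥ (fun i ↦ M i 1) ⨯₃ (fun i ↦ M i 2) := by
    rw [triple_product_eq_det, ← det_transpose M]
    congr 1
    ext i j
    fin_cases i <;> rfl
  rw [hdet, mul_assoc, ← Real.sqrt_mul (by positivity)]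
  exact (abs_dotProduct_le_sqrt_mul_sqrt _ _).trans (by gcongr; exact sum_sq_crossProduct_le _ _)

theorem abs_det_fin_three_le_of_col_le {M : Matrix (Fin 3) (Fin 3) ℝ} {a b d : ℝ}
    (ha : √(∑ i, M i 0 ^ 2) ≤ a) (hb : √(∑ i, M i 1 ^ 2) ≤ b) (hd : √(∑ i, M i 2 ^ 2) ≤ d) :
    |M.det| ≤ a * b * d := by
  have ha₀ : 0 ≤ a := (Real.sqrt_nonneg _).trans ha
  have hb₀ : 0 ≤ b := (Real.sqrt_nonneg _).trans hb
  exact (abs_det_fin_three_le M).trans <|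
    mul_le_mul (mul_le_mul ha hb (Real.sqrt_nonneg _) ha₀) hd (Real.sqrt_nonneg _)
      (mul_nonneg ha₀ hb₀)

theorem sqrt_sum_sq_le_sqrt_card_mul {ι : Type*} [Fintype ι] {v : ι → ℝ} {B : ℝ} (hB : 0 ≤ B)
    (hv : ∀ i, |v i| ≤ B) : √(∑ i, v i ^ 2) ≤ √(Fintype.card ι) * B := by
  rw [← Real.sqrt_sq hB, ← Real.sqrt_mul (Nat.cast_nonneg _)]
  gcongr
  calc ∑ i, v i ^ 2 ≤ ∑ _i : ι, B ^ 2 :=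
        Finset.sum_le_sum fun i _ ↦ sq_le_sq' (abs_le.1 (hv i)).1 (abs_le.1 (hv i)).2
    _ = _ := by simp

theorem abs_sub_le_mul_of_abs_deriv_le {f : ℝ → ℝ} {L : ℝ} (hf : Differentiable ℝ f)
    (hf' : ∀ x, |deriv f x| ≤ L) (u v : ℝ) : |f u - f v| ≤ L * |u - v| := by
  simpa using convex_univ.norm_image_sub_le_of_norm_deriv_le (fun x _ ↦ hf x)
    (fun x _ ↦ hf' x) (mem_univ v) (mem_univ u)

def threePointKernelMatrix (K : ℝ → ℝ) (x₁ x₂ : ℝ) : Matrix (Fin 3) (Fin 3) ℝ :=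
  Matrix.of fun i j : Fin 3 =>
    ![![K 0, K x₁ - K 0, K x₂ - K 0],
      ![K x₁, K 0 - K x₁, K (x₁ - x₂) - K x₁],
      ![K x₂, K (x₁ - x₂) - K x₂, K 0 - K x₂]] i j

theorem abs_threePointKernelMatrix_zero_le {K : ℝ → ℝ} {A : ℝ} (hK : ∀ x, |K x| ≤ A)
    (x₁ x₂ : ℝ) (i : Fin 3) : |threePointKernelMatrix K x₁ x₂ i 0| ≤ A := by
  fin_cases i <;> exact hK _

theorem abs_threePointKernelMatrix_le {K : ℝ → ℝ} {L c x₁ x₂ : ℝ} (hL : 0 ≤ L)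
    (hK : ∀ u v, |K u - K v| ≤ L * |u - v|) (hx₁ : x₁ ∈ Icc 0 c) (hx₂ : x₂ ∈ Icc 0 c)
    (i : Fin 3) {j : Fin 3} (hj : j ≠ 0) : |threePointKernelMatrix K x₁ x₂ i j| ≤ L * (2 * c) := by
  have hdiff : ∀ u ∈ Icc (-c) c, ∀ v ∈ Icc (-c) c, |K u - K v| ≤ L * (2 * c) := fun u hu v hv ↦
    (hK u v).trans <| mul_le_mul_of_nonneg_left
      ((abs_sub_le_of_le_of_le hu.1 hu.2 hv.1 hv.2).trans_eq (by ring)) hL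
  obtain ⟨h₁, h₁'⟩ := hx₁
  obtain ⟨h₂, h₂'⟩ := hx₂
  fin_cases i <;> fin_cases j <;> first
    | exact absurd rfl hj
    | exact hdiff _ ⟨by linarith, by linarith⟩ _ ⟨by linarith, by linarith⟩

theorem three_by_three_determinant_column_bound (C : ℝ) (hC : 0 < C) :
    -- Hadamard-type bound: columns of Euclidean norm at most `Cn, Cn²c, Cn²c`
    (∀ (n : ℕ) (c : ℝ), 0 < c → ∀ M : Matrix (Fin 3) (Fin 3) ℝ,
      Real.sqrt (∑ i, (M i 0) ^ 2) ≤ C * n →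
      Real.sqrt (∑ i, (M i 1) ^ 2) ≤ C * n ^ 2 * c →
      Real.sqrt (∑ i, (M i 2) ^ 2) ≤ C * n ^ 2 * c →
      |M.det| ≤ C ^ 3 * (n : ℝ) ^ 5 * c ^ 2) ∧
    -- consequence for the three-point correlation determinant
    ∃ C' : ℝ, 0 < C' ∧
      ∀ (n : ℕ) (c : ℝ), 0 < c → ∀ (K : ℝ → ℝ),
        (∀ x : ℝ, |K x| ≤ C * n) →
        (∀ x : ℝ, |deriv K x| ≤ C * n ^ 2) →
        ContDiff ℝ 1 K →
        ∀ x₁ x₂ : ℝ, 0 ≤ x₁ → x₁ ≤ c → 0 ≤ x₂ → x₂ ≤ c →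
          |Matrix.det (Matrix.of fun i j : Fin 3 =>
            ![![K 0, K x₁ - K 0, K x₂ - K 0],
              ![K x₁, K 0 - K x₁, K (x₁ - x₂) - K x₁],
              ![K x₂, K (x₁ - x₂) - K x₂, K 0 - K x₂]] i j)| ≤
            C' * (n : ℝ) ^ 5 * c ^ 2 := by
  refine ⟨fun n c _ M h₀ h₁ h₂ ↦ (abs_det_fin_three_le_of_col_le h₀ h₁ h₂).trans_eq (by ring),
    12 * √3 * C ^ 3, by positivity, ?_⟩
  intro n c hc K hK hK' hKd x₁ x₂ h₁ h₁' h₂ h₂'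
  have hlip := abs_sub_le_mul_of_abs_deriv_le (hKd.differentiable one_ne_zero) hK'
  have col₀ := sqrt_sum_sq_le_sqrt_card_mul (by positivity)
    (abs_threePointKernelMatrix_zero_le hK x₁ x₂)
  have col (j : Fin 3) (hj : j ≠ 0) := sqrt_sum_sq_le_sqrt_card_mul (by positivity)
    (abs_threePointKernelMatrix_le (by positivity) hlip ⟨h₁, h₁'⟩ ⟨h₂, h₂'⟩ · hj)
  simp only [Fintype.card_fin, Nat.cast_ofNat] at col₀ col
  refine (abs_det_fin_three_le_of_col_le col₀ (col 1 (by decide)) (col 2 (by decide))).trans_eq ?_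
  linear_combination (4 * √3 * C ^ 3 * n ^ 5 * c ^ 2) * Real.sq_sqrt (show (0 : ℝ) ≤ 3 by norm_num)
end
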